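/- Let F : [0,∞) → ℝ be a cumulative distribution function of a nonnegative random variable (F nondecreasing, F(0) = 0, F(t) → 1 as t → ∞), continuously differentiable on [0,∞), satisfying the renewal equation F(t) = 2t/(1+t)³ + ∫₀ᵗ 2/(1+(t−y))³ · F(y) dy for all t ≥ 0. For n ≥ 2 set ρₙ = n√(log n), mₙ = ∫₀^{ρₙ} t F′(t) dt and sₙ = ∫₀^{ρₙ} t² F′(t) dt. Then mₙ / log(n) → 1 and sₙ / (n√(log n)) → 1 as n → ∞. -/

import Mathlib

/-!
Integrating the renewal equation over `[0, t]` and exchanging the order of integration gives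
`∫₀ᵗ (1 - F y) / (1 + t - y)² dy = t / (1 + t)²`. As `1 - F` is nonincreasing, this forces
`1 - F t ≤ 1 / (1 + t)`, and splitting the integral at `δ t` (with the upper bound on `[0, δ t]`)
gives a matching lower bound, so `t (1 - F t) → 1`. Integration by parts then turns the truncated
moments into tail integrals: `m(x) = ∫₀ˣ (1 - F) - x (1 - F x) ~ log x` and
`s(x) = 2 ∫₀ˣ t (1 - F t) dt - x² (1 - F x) ~ 2x - x = x`. Finally `log ρₙ ~ log n`.
-/

open MeasureTheory Filter Set Asymptotics Function

theorem intervalIntegral_integral_swap_triangle {f : ℝ → ℝ → ℝ} {a b : ℝ} (hab : a ≤ b)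
    (hf : ContinuousOn (uncurry f) {p : ℝ × ℝ | a ≤ p.2 ∧ p.2 ≤ p.1 ∧ p.1 ≤ b}) :
    ∫ s in a..b, ∫ y in a..s, f s y = ∫ y in a..b, ∫ s in y..b, f s y := by
  set K := {p : ℝ × ℝ | a ≤ p.2 ∧ p.2 ≤ p.1 ∧ p.1 ≤ b}
  have hK_closed : IsClosed K := (isClosed_le continuous_const continuous_snd).inter
    ((isClosed_le continuous_snd continuous_fst).inter
      (isClosed_le continuous_fst continuous_const))
  have hK : IsCompact K := (isCompact_Icc.prod (isCompact_Icc (a := a) (b := b))).of_isClosed_subset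
    hK_closed fun p hp => ⟨⟨hp.1.trans hp.2.1, hp.2.2⟩, hp.1, hp.2.1.trans hp.2.2⟩
  have hint : Integrable (uncurry fun s y => K.indicator (uncurry f) (s, y))
      (volume.prod volume) := by
    rw [← Measure.volume_eq_prod]
    exact (hf.integrableOn_compact hK).integrable_indicator hK_closed.measurableSet
  have hs : ∀ s, ∫ y, K.indicator (uncurry f) (s, y) =
      (Icc a b).indicator (fun s => ∫ y in a..s, f s y) s := by
    intro s
    by_cases hs : s ∈ Icc a b
    · rw [indicator_of_mem hs, intervalIntegral.integral_of_le hs.1, ← integral_Icc_eq_integral_Ioc,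
        ← integral_indicator measurableSet_Icc]
      congr 1 with y
      simp only [indicator, mem_ofPred_eq, hs.2, and_true, uncurry_apply_pair, mem_Icc, K]
    · rw [indicator_of_notMem hs]
      refine integral_eq_zero_of_ae (Eventually.of_forall fun y => indicator_of_notMem ?_ _)
      exact fun hy => hs ⟨hy.1.trans hy.2.1, hy.2.2⟩
  have hy : ∀ y, ∫ s, K.indicator (uncurry f) (s, y) =
      (Icc a b).indicator (fun y => ∫ s in y..b, f s y) y := by
    intro y
    by_cases hy : y ∈ Icc a b
    · rw [indicator_of_mem hy, intervalIntegral.integral_of_le hy.2, ← integral_Icc_eq_integral_Ioc,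
        ← integral_indicator measurableSet_Icc]
      congr 1 with s
      simp only [indicator, mem_ofPred_eq, hy.1, true_and, uncurry_apply_pair, mem_Icc, K]
    · rw [indicator_of_notMem hy]
      refine integral_eq_zero_of_ae (Eventually.of_forall fun s => indicator_of_notMem ?_ _)
      exact fun hs => hy ⟨hs.1, hs.2.1.trans hs.2.2⟩
  have swap := integral_integral_swap hint
  simp only [hs, hy, integral_indicator measurableSet_Icc, integral_Icc_eq_integral_Ioc] at swap
  rwa [intervalIntegral.integral_of_le hab, intervalIntegral.integral_of_le hab]

theorem Asymptotics.IsLittleO.intervalIntegral {E : Type*} [NormedAddCommGroup E]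
    [NormedSpace ℝ E] {f : ℝ → E} {g : ℝ → ℝ} {a : ℝ} (h : f =o[atTop] g)
    (hf : ∀ b ≥ a, IntervalIntegrable f volume a b) (hg : ∀ b ≥ a, IntervalIntegrable g volume a b)
    (hg_nonneg : ∀ᶠ x in atTop, 0 ≤ g x)
    (hg_top : Tendsto (fun x => ∫ t in a..x, g t) atTop atTop) :
    (fun x => ∫ t in a..x, f t) =o[atTop] fun x => ∫ t in a..x, g t := by
  refine isLittleO_iff.2 fun ε hε => ?_
  obtain ⟨T, hT⟩ := eventually_atTop.1
    ((isLittleO_iff.1 h (half_pos hε)).and (hg_nonneg.and (eventually_ge_atTop a)))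
  have hTa : a ≤ T := (hT T le_rfl).2.2
  set C := ‖∫ t in a..T, f t‖ - ε / 2 * ∫ t in a..T, g t
  filter_upwards [hg_top.eventually_ge_atTop (2 / ε * C), hg_top.eventually_ge_atTop 0,
    eventually_ge_atTop T] with x hCx hx0 hxT
  have hfT : IntervalIntegrable f volume T x := (hf T hTa).symm.trans (hf x (hTa.trans hxT))
  have hgT : IntervalIntegrable g volume T x := (hg T hTa).symm.trans (hg x (hTa.trans hxT))
  have htail : ‖∫ t in T..x, f t‖ ≤ ∫ t in T..x, ε / 2 * g t := by
    refine intervalIntegral.norm_integral_le_of_norm_le hxT (ae_of_all _ fun t ht => ?_)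
      (hgT.const_mul _)
    obtain ⟨hft, hgt, -⟩ := hT t ht.1.le
    rwa [Real.norm_of_nonneg hgt] at hft
  calc ‖∫ t in a..x, f t‖ = ‖(∫ t in a..T, f t) + ∫ t in T..x, f t‖ := by
        rw [intervalIntegral.integral_add_adjacent_intervals (hf T hTa) hfT]
    _ ≤ ‖∫ t in a..T, f t‖ + ε / 2 * ((∫ t in a..x, g t) - ∫ t in a..T, g t) := by
        rw [intervalIntegral.integral_interval_sub_left (hg x (hTa.trans hxT)) (hg T hTa),
          ← intervalIntegral.integral_const_mul]
        exact (norm_add_le _ _).trans (add_le_add_right htail _)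
    _ = C + ε / 2 * ∫ t in a..x, g t := by ring
    _ ≤ ε * ‖∫ t in a..x, g t‖ := by
        rw [Real.norm_of_nonneg hx0]
        rw [div_mul_eq_mul_div, div_le_iff₀ hε] at hCx
        linarith

theorem Asymptotics.IsEquivalent.intervalIntegral {f g : ℝ → ℝ} {a : ℝ} (h : f ~[atTop] g)
    (hf : ∀ b ≥ a, IntervalIntegrable f volume a b) (hg : ∀ b ≥ a, IntervalIntegrable g volume a b)
    (hg_nonneg : ∀ᶠ x in atTop, 0 ≤ g x)
    (hg_top : Tendsto (fun x => ∫ t in a..x, g t) atTop atTop) :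
    (fun x => ∫ t in a..x, f t) ~[atTop] fun x => ∫ t in a..x, g t := by
  refine (h.isLittleO.intervalIntegral (fun b hb => (hf b hb).sub (hg b hb)) hg hg_nonneg
    hg_top).congr' ?_ EventuallyEq.rfl
  filter_upwards [eventually_ge_atTop a] with x hx
  exact intervalIntegral.integral_sub (hf x hx) (hg x hx)

theorem isEquivalent_integral_id_of_tendsto_one {h : ℝ → ℝ} (hc : ContinuousOn h (Ici 0))
    (hlim : Tendsto h atTop (nhds 1)) :
    (fun x => ∫ t in (0:ℝ)..x, h t) ~[atTop] id := by
  have := ((isEquivalent_const_iff_tendsto one_ne_zero).2 hlim).intervalIntegral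
    (fun b hb => (hc.mono Icc_subset_Ici_self).intervalIntegrable_of_Icc hb)
    (fun _ _ => intervalIntegrable_const) (Eventually.of_forall fun _ => zero_le_one)
    (tendsto_id.congr fun x => by simp)
  exact this.congr_right (Eventually.of_forall fun x => by simp)

theorem isEquivalent_integral_log_of_tendsto_mul_one {g : ℝ → ℝ} (hc : ContinuousOn g (Ici 1))
    (hlim : Tendsto (fun t => t * g t) atTop (nhds 1)) :
    (fun x => ∫ t in (1:ℝ)..x, g t) ~[atTop] Real.log := by
  have hlog : ∀ x ≥ (1:ℝ), ∫ t in (1:ℝ)..x, t⁻¹ = Real.log x := fun x hx => by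
    rw [integral_inv_of_pos one_pos (by linarith), div_one]
  have hequiv : g ~[atTop] fun t => t⁻¹ := by
    have := ((isEquivalent_const_iff_tendsto one_ne_zero).2 hlim).mul
      (IsEquivalent.refl (u := fun t : ℝ => t⁻¹))
    refine (this.congr_left ?_).congr_right ?_
    · filter_upwards [eventually_gt_atTop 0] with t ht
      simp only [Pi.mul_apply]
      field_simp
    · simp
  refine (hequiv.intervalIntegral
    (fun b hb => (hc.mono Icc_subset_Ici_self).intervalIntegrable_of_Icc hb)
    (fun b hb => ((continuousOn_inv₀.mono fun t ht => ?_).intervalIntegrable_of_Icc hb))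
    ((eventually_ge_atTop 0).mono fun t ht => inv_nonneg.2 ht) ?_).congr_right ?_
  · exact (zero_lt_one.trans_le ht.1).ne'
  · exact Real.tendsto_log_atTop.congr' <| (eventually_ge_atTop 1).mono fun x hx => (hlog x hx).symm
  · exact (eventually_ge_atTop 1).mono hlog

theorem integral_mul_deriv_eq_integral_mul_one_sub {u u' F F' : ℝ → ℝ} {x : ℝ} (hx : 0 ≤ x)
    (hu : ∀ t, HasDerivAt u (u' t) t) (hu' : Continuous u') (hu0 : u 0 = 0)
    (hF : ∀ t ∈ Icc 0 x, HasDerivWithinAt F (F' t) (Icc 0 x) t) (hF' : ContinuousOn F' (Icc 0 x)) :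
    ∫ t in (0:ℝ)..x, u t * F' t = (∫ t in (0:ℝ)..x, u' t * (1 - F t)) - u x * (1 - F x) := by
  rw [← uIcc_of_le hx] at hF hF'
  rw [intervalIntegral.integral_mul_deriv_eq_deriv_mul_of_hasDerivWithinAt
    (fun t _ => (hu t).hasDerivWithinAt) (fun t ht => (hF t ht).sub_const 1)
    (hu'.intervalIntegrable _ _) hF'.intervalIntegrable, hu0]
  have hneg : ∫ t in (0:ℝ)..x, u' t * (F t - 1) = -∫ t in (0:ℝ)..x, u' t * (1 - F t) := by
    rw [← intervalIntegral.integral_neg]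
    congr 1 with t
    ring
  rw [hneg]
  ring

theorem MonotoneOn.le_of_tendsto_atTop {α β : Type*} [SemilatticeSup α] [Nonempty α]
    [TopologicalSpace β] [Preorder β] [ClosedIciTopology β] {f : α → β} {a : α} {c : β}
    (hf : MonotoneOn f (Ici a)) (hlim : Tendsto f atTop (nhds c)) {t : α} (ht : a ≤ t) :
    f t ≤ c :=
  ge_of_tendsto hlim <| (eventually_ge_atTop t).mono fun _ hs => hf ht (ht.trans hs) hs

theorem integral_two_div_one_add_pow_three {x : ℝ} (hx : 0 ≤ x) :
    ∫ u in (0:ℝ)..x, 2 / (1 + u) ^ 3 = 1 - 1 / (1 + x) ^ 2 := by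
  have hpos : ∀ u ∈ uIcc 0 x, 0 < 1 + u := fun u hu => by linarith [(uIcc_of_le hx ▸ hu).1]
  have hderiv : ∀ u ∈ uIcc 0 x, HasDerivAt (fun u => -1 / (1 + u) ^ 2) (2 / (1 + u) ^ 3) u := by
    intro u hu
    refine ((hasDerivAt_const u (-1 : ℝ)).fun_div (((hasDerivAt_id' u).const_add 1).fun_pow 2)
      (pow_ne_zero 2 (hpos u hu).ne')).congr_deriv ?_
    have := (hpos u hu).ne'
    field_simp
    ring
  rw [intervalIntegral.integral_eq_sub_of_hasDerivAt hderiv]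
  · ring
  · exact (continuousOn_const.div (by fun_prop) fun u hu =>
      pow_ne_zero 3 (hpos u hu).ne').intervalIntegrable

theorem integral_two_mul_div_one_add_pow_three {x : ℝ} (hx : 0 ≤ x) :
    ∫ u in (0:ℝ)..x, 2 * u / (1 + u) ^ 3 = x ^ 2 / (1 + x) ^ 2 := by
  have hpos : ∀ u ∈ uIcc 0 x, 0 < 1 + u := fun u hu => by linarith [(uIcc_of_le hx ▸ hu).1]
  have hderiv : ∀ u ∈ uIcc 0 x,
      HasDerivAt (fun u => u ^ 2 / (1 + u) ^ 2) (2 * u / (1 + u) ^ 3) u := by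
    intro u hu
    refine ((hasDerivAt_pow 2 u).fun_div (((hasDerivAt_id' u).const_add 1).fun_pow 2)
      (pow_ne_zero 2 (hpos u hu).ne')).congr_deriv ?_
    have := (hpos u hu).ne'
    field_simp
    ring
  rw [intervalIntegral.integral_eq_sub_of_hasDerivAt hderiv]
  · simp
  · exact (ContinuousOn.div (by fun_prop) (by fun_prop) fun u hu =>
      pow_ne_zero 3 (hpos u hu).ne').intervalIntegrable

theorem integral_one_div_one_add_sub_sq {a b t : ℝ} (hab : a ≤ b) (hbt : b ≤ t) :
    ∫ y in a..b, 1 / (1 + (t - y)) ^ 2 = 1 / (1 + (t - b)) - 1 / (1 + (t - a)) := by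
  have hpos : ∀ y ∈ uIcc a b, 0 < 1 + (t - y) := fun y hy => by
    linarith [(uIcc_of_le hab ▸ hy).2]
  have hderiv : ∀ y ∈ uIcc a b,
      HasDerivAt (fun y => 1 / (1 + (t - y))) (1 / (1 + (t - y)) ^ 2) y := by
    intro y hy
    refine ((hasDerivAt_const y (1 : ℝ)).fun_div (((hasDerivAt_id' y).const_sub t).const_add 1)
      (hpos y hy).ne').congr_deriv ?_
    ring
  rw [intervalIntegral.integral_eq_sub_of_hasDerivAt hderiv]
  exact (continuousOn_const.div (by fun_prop) fun y hy =>
    pow_ne_zero 2 (hpos y hy).ne').intervalIntegrable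

theorem integral_inv_one_add {x : ℝ} (hx : 0 ≤ x) :
    ∫ y in (0:ℝ)..x, (1 + y)⁻¹ = Real.log (1 + x) := by
  rw [intervalIntegral.integral_comp_add_left (fun y => y⁻¹),
    integral_inv_of_pos (by norm_num) (by linarith)]
  simp

theorem intervalIntegrable_div_one_add_sub_sq {g : ℝ → ℝ} {a b t : ℝ} (hab : a ≤ b) (hbt : b ≤ t)
    (hg : ContinuousOn g (Icc a b)) :
    IntervalIntegrable (fun y => g y / (1 + (t - y)) ^ 2) volume a b :=
  (hg.div (by fun_prop) fun y hy =>
    pow_ne_zero 2 (by linarith [hy.2])).intervalIntegrable_of_Icc hab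

theorem integral_one_sub_div_one_add_sub_sq_le_one_sub {F : ℝ → ℝ} (hFc : ContinuousOn F (Ici 0))
    (hmono : MonotoneOn F (Ici 0)) (hlim : Tendsto F atTop (nhds 1)) {s t : ℝ} (hs : 0 ≤ s)
    (hst : s ≤ t) :
    ∫ y in s..t, (1 - F y) / (1 + (t - y)) ^ 2 ≤ 1 - F s := by
  have hFs : 0 ≤ 1 - F s := sub_nonneg.2 (hmono.le_of_tendsto_atTop hlim hs)
  calc ∫ y in s..t, (1 - F y) / (1 + (t - y)) ^ 2
      ≤ ∫ y in s..t, (1 - F s) * (1 / (1 + (t - y)) ^ 2) := by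
        refine intervalIntegral.integral_mono_on hst
          (intervalIntegrable_div_one_add_sub_sq hst le_rfl
            (continuousOn_const.sub (hFc.mono fun _ hy => hs.trans hy.1)))
          ((intervalIntegrable_div_one_add_sub_sq hst le_rfl continuousOn_const).const_mul _)
          fun y hy => ?_
        rw [mul_one_div]
        gcongr
        exact hmono hs (hs.trans hy.1) hy.1
    _ = (1 - F s) * (1 - 1 / (1 + (t - s))) := by
        rw [intervalIntegral.integral_const_mul, integral_one_div_one_add_sub_sq hst le_rfl]
        norm_num
    _ ≤ 1 - F s := mul_le_of_le_one_right hFs (sub_le_self _ (by positivity))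

def SolvesRenewalEquation (F : ℝ → ℝ) : Prop :=
  ∀ t, 0 ≤ t → F t = 2 * t / (1 + t) ^ 3 + ∫ y in (0:ℝ)..t, 2 / (1 + (t - y)) ^ 3 * F y

namespace SolvesRenewalEquation

variable {F F' : ℝ → ℝ}

theorem integral_div_one_add_sub_sq (hF : SolvesRenewalEquation F) (hFc : ContinuousOn F (Ici 0))
    {t : ℝ} (ht : 0 ≤ t) :
    ∫ y in (0:ℝ)..t, F y / (1 + (t - y)) ^ 2 = t ^ 2 / (1 + t) ^ 2 := by
  have hFint : IntervalIntegrable F volume 0 t :=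
    (hFc.mono Icc_subset_Ici_self).intervalIntegrable_of_Icc ht
  have swap := intervalIntegral_integral_swap_triangle (f := fun s y => 2 / (1 + (s - y)) ^ 3 * F y)
    ht <| ContinuousOn.mul
      (continuousOn_const.div (by fun_prop) fun p hp => by
        have : 0 ≤ p.1 - p.2 := sub_nonneg.2 hp.2.1
        positivity)
      (hFc.comp continuousOn_snd fun p hp => hp.1)
  have hinner_left : ∀ s ∈ uIcc 0 t,
      ∫ y in (0:ℝ)..s, 2 / (1 + (s - y)) ^ 3 * F y = F s - 2 * s / (1 + s) ^ 3 := fun s hs => by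
    linarith [hF s (uIcc_of_le ht ▸ hs).1]
  have hinner_right : ∀ y ∈ uIcc 0 t,
      ∫ s in y..t, 2 / (1 + (s - y)) ^ 3 * F y = F y - F y / (1 + (t - y)) ^ 2 := fun y hy => by
    rw [intervalIntegral.integral_mul_const,
      intervalIntegral.integral_comp_sub_right (fun u => 2 / (1 + u) ^ 3), sub_self,
      integral_two_div_one_add_pow_three (sub_nonneg.2 (uIcc_of_le ht ▸ hy).2)]
    ring
  rw [intervalIntegral.integral_congr hinner_left, intervalIntegral.integral_congr hinner_right,
    intervalIntegral.integral_sub hFint, intervalIntegral.integral_sub hFint,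
    integral_two_mul_div_one_add_pow_three ht] at swap
  · linarith
  · exact intervalIntegrable_div_one_add_sub_sq ht le_rfl (hFc.mono Icc_subset_Ici_self)
  · exact (ContinuousOn.div (by fun_prop) (by fun_prop) fun s hs =>
      pow_ne_zero 3 (by linarith [(uIcc_of_le ht ▸ hs).1])).intervalIntegrable

theorem integral_one_sub_div_one_add_sub_sq (hF : SolvesRenewalEquation F)
    (hFc : ContinuousOn F (Ici 0)) {t : ℝ} (ht : 0 ≤ t) :
    ∫ y in (0:ℝ)..t, (1 - F y) / (1 + (t - y)) ^ 2 = t / (1 + t) ^ 2 := by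
  simp_rw [sub_div]
  rw [intervalIntegral.integral_sub
      (intervalIntegrable_div_one_add_sub_sq ht le_rfl continuousOn_const)
      (intervalIntegrable_div_one_add_sub_sq ht le_rfl (hFc.mono Icc_subset_Ici_self)),
    integral_one_div_one_add_sub_sq ht le_rfl, hF.integral_div_one_add_sub_sq hFc ht]
  have : 0 < 1 + t := by linarith
  simp only [sub_self, sub_zero, add_zero]
  field_simp
  ring

theorem one_sub_le_inv_one_add (hF : SolvesRenewalEquation F) (hFc : ContinuousOn F (Ici 0))
    (hmono : MonotoneOn F (Ici 0)) {t : ℝ} (ht : 0 ≤ t) :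
    1 - F t ≤ (1 + t)⁻¹ := by
  rcases ht.eq_or_lt with rfl | ht
  · have hF0 : F 0 = 0 := by simpa using hF 0 le_rfl
    simp [hF0]
  have key : (1 - F t) * (t / (1 + t)) ≤ (1 + t)⁻¹ * (t / (1 + t)) := by
    calc (1 - F t) * (t / (1 + t)) = ∫ y in (0:ℝ)..t, (1 - F t) / (1 + (t - y)) ^ 2 := by
          simp_rw [div_eq_mul_one_div (1 - F t)]
          rw [intervalIntegral.integral_const_mul, integral_one_div_one_add_sub_sq ht.le le_rfl]
          field_simp
          ring
      _ ≤ ∫ y in (0:ℝ)..t, (1 - F y) / (1 + (t - y)) ^ 2 := by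
          refine intervalIntegral.integral_mono_on ht.le
            (intervalIntegrable_div_one_add_sub_sq ht.le le_rfl continuousOn_const)
            (intervalIntegrable_div_one_add_sub_sq ht.le le_rfl
              (continuousOn_const.sub (hFc.mono Icc_subset_Ici_self))) fun y hy => ?_
          gcongr
          exact hmono hy.1 ht.le hy.2
      _ = (1 + t)⁻¹ * (t / (1 + t)) := by
          rw [hF.integral_one_sub_div_one_add_sub_sq hFc ht.le]
          field_simp
  exact le_of_mul_le_mul_right key (by positivity)

theorem integral_one_sub_div_one_add_sub_sq_le_log (hF : SolvesRenewalEquation F)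
    (hFc : ContinuousOn F (Ici 0)) (hmono : MonotoneOn F (Ici 0)) {δ t : ℝ} (hδ0 : 0 ≤ δ)
    (hδ1 : δ < 1) (ht : 0 ≤ t) :
    ∫ y in (0:ℝ)..δ * t, (1 - F y) / (1 + (t - y)) ^ 2 ≤
      Real.log (1 + t) / ((1 - δ) * (1 + t)) ^ 2 := by
  have hs0 : 0 ≤ δ * t := mul_nonneg hδ0 ht
  have hc : 0 < (1 - δ) * (1 + t) := by nlinarith
  calc ∫ y in (0:ℝ)..δ * t, (1 - F y) / (1 + (t - y)) ^ 2
      ≤ ∫ y in (0:ℝ)..δ * t, (1 + y)⁻¹ / ((1 - δ) * (1 + t)) ^ 2 := by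
        refine intervalIntegral.integral_mono_on hs0
          (intervalIntegrable_div_one_add_sub_sq hs0 (mul_le_of_le_one_left ht hδ1.le)
            (continuousOn_const.sub (hFc.mono Icc_subset_Ici_self)))
          ((ContinuousOn.inv₀ (by fun_prop) fun y hy => ?_).div_const _).intervalIntegrable
          fun y hy => ?_
        · linarith [(uIcc_of_le hs0 ▸ hy).1]
        have hy1 : 0 < 1 + y := by linarith [hy.1]
        have hcy : (1 - δ) * (1 + t) ≤ 1 + (t - y) := by nlinarith [hy.2]
        calc (1 - F y) / (1 + (t - y)) ^ 2 ≤ (1 + y)⁻¹ / (1 + (t - y)) ^ 2 := by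
              gcongr
              exact hF.one_sub_le_inv_one_add hFc hmono hy.1
          _ ≤ (1 + y)⁻¹ / ((1 - δ) * (1 + t)) ^ 2 := by gcongr
    _ = Real.log (1 + δ * t) / ((1 - δ) * (1 + t)) ^ 2 := by
        rw [intervalIntegral.integral_div, integral_inv_one_add hs0]
    _ ≤ Real.log (1 + t) / ((1 - δ) * (1 + t)) ^ 2 := by
        gcongr
        exact mul_le_of_le_one_left ht hδ1.le

theorem le_one_sub_apply_mul (hF : SolvesRenewalEquation F) (hFc : ContinuousOn F (Ici 0))
    (hmono : MonotoneOn F (Ici 0)) (hlim : Tendsto F atTop (nhds 1)) {δ t : ℝ} (hδ0 : 0 ≤ δ)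
    (hδ1 : δ < 1) (ht : 0 ≤ t) :
    t / (1 + t) ^ 2 - Real.log (1 + t) / ((1 - δ) * (1 + t)) ^ 2 ≤ 1 - F (δ * t) := by
  have hs0 : 0 ≤ δ * t := mul_nonneg hδ0 ht
  have hst : δ * t ≤ t := mul_le_of_le_one_left ht hδ1.le
  have hint : ∀ {a b : ℝ}, 0 ≤ a → a ≤ b → b ≤ t →
      IntervalIntegrable (fun y => (1 - F y) / (1 + (t - y)) ^ 2) volume a b := fun ha hab hbt =>
    intervalIntegrable_div_one_add_sub_sq hab hbt
      (continuousOn_const.sub (hFc.mono fun _ hy => ha.trans hy.1))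
  have hsplit := intervalIntegral.integral_add_adjacent_intervals (hint le_rfl hs0 hst)
    (hint hs0 hst le_rfl)
  rw [hF.integral_one_sub_div_one_add_sub_sq hFc ht] at hsplit
  linarith [hF.integral_one_sub_div_one_add_sub_sq_le_log hFc hmono hδ0 hδ1 ht,
    integral_one_sub_div_one_add_sub_sq_le_one_sub hFc hmono hlim hs0 hst]

theorem tendsto_mul_one_sub (hF : SolvesRenewalEquation F) (hFc : ContinuousOn F (Ici 0))
    (hmono : MonotoneOn F (Ici 0)) (hlim : Tendsto F atTop (nhds 1)) :
    Tendsto (fun t => t * (1 - F t)) atTop (nhds 1) := by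
  have hr : Tendsto (fun t : ℝ => t / (1 + t)) atTop (nhds 1) :=
    (isEquivalent_iff_tendsto_one ((eventually_gt_atTop 0).mono fun t ht =>
      (by linarith : (0:ℝ) < 1 + t).ne')).1
      (IsEquivalent.refl.const_add_of_norm_tendsto_atTop tendsto_norm_atTop_atTop).symm
  have hℓ : Tendsto (fun t : ℝ => Real.log (1 + t) / (1 + t)) atTop (nhds 0) :=
    Real.isLittleO_log_id_atTop.tendsto_div_nhds_zero.comp
      (tendsto_atTop_add_const_left atTop 1 tendsto_id)
  rw [tendsto_order]
  refine ⟨fun c hc => ?_, fun c hc => ?_⟩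
  · obtain ⟨δ, hcδ, hδ1⟩ := exists_between (max_lt hc one_pos)
    have hδ0 : 0 < δ := (le_max_right c 0).trans_lt hcδ
    have hψ : Tendsto (fun t => δ * ((t / (1 + t)) ^ 2 -
        t / (1 + t) * (Real.log (1 + t) / (1 + t)) / (1 - δ) ^ 2)) atTop (nhds δ) := by
      simpa using (((hr.pow 2).sub ((hr.mul hℓ).div_const _)).const_mul δ)
    -- At `t = s / δ`, `s` times the lower bound for `1 - F (δ t)` is the function in `hψ`.
    filter_upwards [(hψ.comp (tendsto_id.atTop_div_const hδ0)).eventually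
      (eventually_gt_nhds ((le_max_left c 0).trans_lt hcδ)), eventually_gt_atTop 0] with s hs hs0
    have hbound := hF.le_one_sub_apply_mul hFc hmono hlim hδ0.le hδ1 (by positivity : 0 ≤ s / δ)
    rw [mul_div_cancel₀ s hδ0.ne'] at hbound
    refine hs.trans_le (le_of_eq_of_le ?_ (mul_le_mul_of_nonneg_left hbound hs0.le))
    have : 0 < 1 + s / δ := by positivity
    have : 0 < 1 - δ := by linarith
    simp only [Function.comp, id]
    field_simp
  · filter_upwards [eventually_ge_atTop 0] with t ht
    calc t * (1 - F t) ≤ t * (1 + t)⁻¹ :=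
          mul_le_mul_of_nonneg_left (hF.one_sub_le_inv_one_add hFc hmono ht) ht
      _ < 1 := by rw [← div_eq_mul_inv, div_lt_one (by linarith)]; linarith
      _ < c := hc

theorem isEquivalent_integral_mul_deriv
    (hF : SolvesRenewalEquation F) (hmono : MonotoneOn F (Ici 0)) (hlim : Tendsto F atTop (nhds 1))
    (hderiv : ∀ t, 0 ≤ t → HasDerivWithinAt F (F' t) (Ici 0) t) (hcont : ContinuousOn F' (Ici 0)) :
    (fun x => ∫ t in (0:ℝ)..x, t * F' t) ~[atTop] Real.log := by
  have hFc : ContinuousOn F (Ici 0) := fun t ht => (hderiv t ht).continuousWithinAt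
  have htail := hF.tendsto_mul_one_sub hFc hmono hlim
  have hint : ∀ {a b : ℝ}, 0 ≤ a → a ≤ b → IntervalIntegrable (fun t => 1 - F t) volume a b :=
    fun ha hab =>
      (continuousOn_const.sub (hFc.mono fun _ ht => ha.trans ht.1)).intervalIntegrable_of_Icc hab
  have hparts : ∀ x ≥ (1:ℝ), ∫ t in (0:ℝ)..x, t * F' t =
      (∫ t in (1:ℝ)..x, (1 - F t)) + ((∫ t in (0:ℝ)..1, (1 - F t)) - x * (1 - F x)) :=
      fun x hx => by
    rw [integral_mul_deriv_eq_integral_mul_one_sub (by linarith) hasDerivAt_id' continuous_const rfl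
      (fun t ht => (hderiv t ht.1).mono Icc_subset_Ici_self) (hcont.mono Icc_subset_Ici_self)]
    simp only [one_mul]
    rw [← intervalIntegral.integral_add_adjacent_intervals (hint le_rfl zero_le_one)
      (hint zero_le_one hx)]
    ring
  have hbounded : (fun x => (∫ t in (0:ℝ)..1, (1 - F t)) - x * (1 - F x)) =o[atTop] Real.log :=
    ((tendsto_const_nhds.sub htail).isBigO_one ℝ).trans_isLittleO Real.isLittleO_const_log_atTop
  refine ((isEquivalent_integral_log_of_tendsto_mul_one ?_ htail).add_isLittleO
    hbounded).congr_left ?_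
  · exact continuousOn_const.sub (hFc.mono fun _ ht => zero_le_one.trans (mem_Ici.1 ht))
  · exact (eventually_ge_atTop 1).mono fun x hx => (hparts x hx).symm

theorem isEquivalent_integral_sq_mul_deriv
    (hF : SolvesRenewalEquation F) (hmono : MonotoneOn F (Ici 0)) (hlim : Tendsto F atTop (nhds 1))
    (hderiv : ∀ t, 0 ≤ t → HasDerivWithinAt F (F' t) (Ici 0) t) (hcont : ContinuousOn F' (Ici 0)) :
    (fun x => ∫ t in (0:ℝ)..x, t ^ 2 * F' t) ~[atTop] id := by
  have hFc : ContinuousOn F (Ici 0) := fun t ht => (hderiv t ht).continuousWithinAt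
  have htail := hF.tendsto_mul_one_sub hFc hmono hlim
  have hmean : Tendsto (fun x => (∫ t in (0:ℝ)..x, t * (1 - F t)) / x) atTop (nhds 1) :=
    (isEquivalent_iff_tendsto_one ((eventually_ne_atTop 0).mono fun _ hx => hx)).1
      (isEquivalent_integral_id_of_tendsto_one
        (continuousOn_id.mul (continuousOn_const.sub hFc)) htail)
  refine isEquivalent_of_tendsto_one ?_
  have hlim2 := (hmean.const_mul 2).sub htail
  rw [show (2:ℝ) * 1 - 1 = 1 by norm_num] at hlim2
  refine hlim2.congr' ((eventually_gt_atTop 0).mono fun x hx => ?_)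
  rw [Pi.div_apply, integral_mul_deriv_eq_integral_mul_one_sub hx.le (fun t => hasDerivAt_pow 2 t)
    (by fun_prop) (by simp) (fun t ht => (hderiv t ht.1).mono Icc_subset_Ici_self)
    (hcont.mono Icc_subset_Ici_self)]
  simp only [Nat.cast_ofNat, Nat.add_one_sub_one, pow_one, mul_assoc, id,
    intervalIntegral.integral_const_mul]
  field_simp

end SolvesRenewalEquation

theorem tendsto_mul_sqrt_log_atTop : Tendsto (fun x : ℝ => x * √(Real.log x)) atTop atTop :=
  tendsto_id.atTop_mul_atTop₀ (Real.tendsto_sqrt_atTop.comp Real.tendsto_log_atTop)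

theorem isEquivalent_log_mul_sqrt_log :
    (fun x : ℝ => Real.log (x * √(Real.log x))) ~[atTop] Real.log := by
  have hsmall : (fun x => 2⁻¹ * Real.log (Real.log x)) =o[atTop] Real.log :=
    (Real.isLittleO_log_id_atTop.comp_tendsto Real.tendsto_log_atTop).const_mul_left _
  refine (IsEquivalent.refl.add_isLittleO hsmall).congr_left ?_
  filter_upwards [eventually_gt_atTop 1] with x hx
  have hlog := Real.log_pos hx
  rw [Pi.add_apply, Real.log_mul (by linarith) (Real.sqrt_pos.2 hlog).ne', Real.log_sqrt hlog.le]
  ring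

theorem truncated_moments_at_rho_n_general
    (F F' : ℝ → ℝ)
    (hmono : ∀ a b : ℝ, 0 ≤ a → a ≤ b → F a ≤ F b)
    (hlim : Filter.Tendsto F atTop (nhds 1))
    (hderiv : ∀ t, 0 ≤ t → HasDerivWithinAt F (F' t) (Ici 0) t)
    (hcont : ContinuousOn F' (Ici 0))
    (hrenewal : ∀ t, 0 ≤ t →
      F t = 2 * t / (1 + t) ^ 3 + ∫ y in (0:ℝ)..t, 2 / (1 + (t - y)) ^ 3 * F y) :
    Filter.Tendsto
      (fun n : ℕ =>
        (∫ t in (0:ℝ)..((n : ℝ) * Real.sqrt (Real.log n)), t * F' t) / Real.log n)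
      atTop (nhds 1)
    ∧ Filter.Tendsto
      (fun n : ℕ =>
        (∫ t in (0:ℝ)..((n : ℝ) * Real.sqrt (Real.log n)), t ^ 2 * F' t)
          / ((n : ℝ) * Real.sqrt (Real.log n)))
      atTop (nhds 1) := by
  have hF : SolvesRenewalEquation F := hrenewal
  have hmono' : MonotoneOn F (Ici 0) := fun a ha b _ hab => hmono a b ha hab
  have hρ : Tendsto (fun n : ℕ => (n : ℝ) * Real.sqrt (Real.log n)) atTop atTop :=
    tendsto_mul_sqrt_log_atTop.comp tendsto_natCast_atTop_atTop
  have hlog : Tendsto (fun n : ℕ => Real.log n) atTop atTop :=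
    Real.tendsto_log_atTop.comp tendsto_natCast_atTop_atTop
  constructor
  · refine (isEquivalent_iff_tendsto_one (hlog.eventually_ne_atTop 0)).1 ?_
    exact ((hF.isEquivalent_integral_mul_deriv hmono' hlim hderiv hcont).comp_tendsto hρ).trans
      (isEquivalent_log_mul_sqrt_log.comp_tendsto tendsto_natCast_atTop_atTop)
  · exact (isEquivalent_iff_tendsto_one (hρ.eventually_ne_atTop 0)).1
      ((hF.isEquivalent_integral_sq_mul_deriv hmono' hlim hderiv hcont).comp_tendsto hρ)

/-- For the CDF `F` solving the renewal equation, with `ρₙ = n√(log n)`,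
`mₙ = ∫₀^{ρₙ} t F'(t) dt` and `sₙ = ∫₀^{ρₙ} t² F'(t) dt`, one has
`mₙ / log n → 1` and `sₙ / (n√(log n)) → 1` as `n → ∞`. -/
theorem truncated_moments_at_rho_n
    (F F' : ℝ → ℝ)
    (hmono : ∀ a b : ℝ, 0 ≤ a → a ≤ b → F a ≤ F b)
    (hzero : F 0 = 0)
    (hlim : Filter.Tendsto F atTop (nhds 1))
    (hderiv : ∀ t, 0 ≤ t → HasDerivWithinAt F (F' t) (Ici 0) t)
    (hcont : ContinuousOn F' (Ici 0))
    (hrenewal : ∀ t, 0 ≤ t →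
      F t = 2 * t / (1 + t) ^ 3 + ∫ y in (0:ℝ)..t, 2 / (1 + (t - y)) ^ 3 * F y) :
    Filter.Tendsto
      (fun n : ℕ =>
        (∫ t in (0:ℝ)..((n : ℝ) * Real.sqrt (Real.log n)), t * F' t) / Real.log n)
      atTop (nhds 1)
    ∧ Filter.Tendsto
      (fun n : ℕ =>
        (∫ t in (0:ℝ)..((n : ℝ) * Real.sqrt (Real.log n)), t ^ 2 * F' t)
          / ((n : ℝ) * Real.sqrt (Real.log n)))
      atTop (nhds 1) :=
  truncated_moments_at_rho_n_general F F' hmono hlim hderiv hcont hrenewal
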